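/- Suppose L is generic, satisfies the triangle inequality, and s₂ + s₃ > (l_1 + … + l_n)/2. Then for every vertex (I, J, K) of Γ(L), there is no path in Γ(L) from (I, J, K) to its mirror image (J, I, K); that is, a vertex and its mirror image lie in different connected components of Γ(L). -/

import Mathlib

open Finset

/-- `I ⊆ [n]` is *short*: the sum of its lengths is less than that of its complement. -/
def ShortSet {n : ℕ} (L : Fin n → ℝ) (I : Finset (Fin n)) : Prop :=
  ∑ i ∈ I, L i < ∑ i ∈ Iᶜ, L i

/-- `I ⊆ [n]` is *long*: the sum of its lengths is greater than that of its complement. -/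
def LongSet {n : ℕ} (L : Fin n → ℝ) (I : Finset (Fin n)) : Prop :=
  ∑ i ∈ Iᶜ, L i < ∑ i ∈ I, L i

/-- The length vector `L` is *generic*. -/
def GenericVec {n : ℕ} (L : Fin n → ℝ) : Prop :=
  ∀ I : Finset (Fin n), ∑ i ∈ I, L i ≠ ∑ i ∈ Iᶜ, L i

/-- `L` satisfies the triangle inequality: every singleton is short. -/
def TriangleIneq {n : ℕ} (L : Fin n → ℝ) : Prop :=
  ∀ i : Fin n, ShortSet L {i}

/-- Ordered triples of subsets of `[n]`. -/
abbrev LTriple (n : ℕ) := Finset (Fin n) × Finset (Fin n) × Finset (Fin n)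

/-- An ordered triple `(I, J, K)` representing a vertex of `Γ(L)`: three pairwise
disjoint nonempty short sets whose union is `[n]`. -/
def IsVertex {n : ℕ} (L : Fin n → ℝ) (V : LTriple n) : Prop :=
  V.1.Nonempty ∧ V.2.1.Nonempty ∧ V.2.2.Nonempty ∧
  ShortSet L V.1 ∧ ShortSet L V.2.1 ∧ ShortSet L V.2.2 ∧
  Disjoint V.1 V.2.1 ∧ Disjoint V.1 V.2.2 ∧ Disjoint V.2.1 V.2.2 ∧
  V.1 ∪ V.2.1 ∪ V.2.2 = Finset.univ

/-- Cyclic rotation of an ordered triple. -/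
def rotT {n : ℕ} (V : LTriple n) : LTriple n := (V.2.1, V.2.2, V.1)

/-- Two ordered triples represent the same cyclically ordered partition
(`(I,J,K)`, `(J,K,I)` and `(K,I,J)` are identified). -/
def CyclEq {n : ℕ} (V W : LTriple n) : Prop :=
  W = V ∨ W = rotT V ∨ W = rotT (rotT V)

/-- The mirror image of the vertex `(I, J, K)` is the vertex `(J, I, K)`. -/
def mirrorT {n : ℕ} (V : LTriple n) : LTriple n := (V.2.1, V.1, V.2.2)

/-- The elementary move on representatives: shift a nonempty proper subset
`S ⊊ I` to the second part, provided `J ∪ S` stays short. -/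
def MoveStep {n : ℕ} (L : Fin n → ℝ) (V W : LTriple n) : Prop :=
  ∃ S : Finset (Fin n), S.Nonempty ∧ S ⊂ V.1 ∧ ShortSet L (V.2.1 ∪ S) ∧
    W = (V.1 \ S, V.2.1 ∪ S, V.2.2)

/-- Adjacency in `Γ(L)`: one of the two vertices has a representative from which an
elementary move leads to a representative of the other. -/
def GammaAdj {n : ℕ} (L : Fin n → ℝ) (V W : LTriple n) : Prop :=
  (∃ V' W' : LTriple n, CyclEq V V' ∧ MoveStep L V' W' ∧ CyclEq W W') ∨
  (∃ W' V' : LTriple n, CyclEq W W' ∧ MoveStep L W' V' ∧ CyclEq V V')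

/-- There is a path of length `m` (i.e. with `m` consecutive edges) in `Γ(L)`
from the vertex `V` to the vertex `W`. -/
def GammaPath {n : ℕ} (L : Fin n → ℝ) (m : ℕ) (V W : LTriple n) : Prop :=
  ∃ f : ℕ → LTriple n, CyclEq V (f 0) ∧ CyclEq W (f m) ∧
    (∀ i ≤ m, IsVertex L (f i)) ∧ ∀ i < m, GammaAdj L (f i) (f (i + 1))

/-- The list of lengths sorted in nonincreasing order. -/
noncomputable def sortedDesc {n : ℕ} (L : Fin n → ℝ) : List ℝ :=
  List.insertionSort (· ≥ ·) (List.ofFn L)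

/-- The second largest length (with multiplicity). -/
noncomputable def s2 {n : ℕ} (L : Fin n → ℝ) : ℝ := (sortedDesc L).getD 1 0

/-- The third largest length (with multiplicity). -/
noncomputable def s3 {n : ℕ} (L : Fin n → ℝ) : ℝ := (sortedDesc L).getD 2 0

/-!
Let `a`, `b`, `c` be indices of the three largest lengths. As `s₂ + s₃` exceeds half the total
length, any two of them form a long set, so in every vertex they lie in three different parts, and
no move can carry one of them: the part it would join already contains another. Hence the cyclic
order of the parts containing `a` and `b` is constant along paths, while mirroring reverses it.
-/

theorem Finset.exists_mem_of_map_val_eq_cons {α β : Type*} [DecidableEq α] {f : α → β}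
    {s : Finset α} {d : β} {m : Multiset β} (h : s.val.map f = d ::ₘ m) :
    ∃ a ∈ s, f a = d ∧ (s.erase a).val.map f = m := by
  obtain ⟨a, ha, hfa, hm⟩ := (Multiset.map_eq_cons f _ _ _).2 h
  exact ⟨a, ha, hfa, by rwa [erase_val]⟩

section

variable {n : ℕ} {L : Fin n → ℝ} {T : Finset (Fin n)} {V W : LTriple n}

theorem ShortSet.sum_lt_half {I : Finset (Fin n)} (hI : ShortSet L I) :
    ∑ i ∈ I, L i < (∑ i, L i) / 2 := by
  have := sum_add_sum_compl I L
  unfold ShortSet at hI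
  linarith

def ShortSeparated (L : Fin n → ℝ) (T : Finset (Fin n)) : Prop :=
  ∀ I, ShortSet L I → #(I ∩ T) ≤ 1

theorem ShortSeparated.eq_of_mem {I : Finset (Fin n)} (hT : ShortSeparated L T)
    (hI : ShortSet L I) {x y : Fin n} (hxI : x ∈ I) (hyI : y ∈ I) (hxT : x ∈ T) (hyT : y ∈ T) :
    x = y :=
  card_le_one.1 (hT I hI) x (mem_inter.2 ⟨hxI, hxT⟩) y (mem_inter.2 ⟨hyI, hyT⟩)

theorem shortSeparated_of_half_lt_add (hL : ∀ i, 0 ≤ L i)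
    (hT : ∀ x ∈ T, ∀ y ∈ T, x ≠ y → (∑ i, L i) / 2 < L x + L y) : ShortSeparated L T := by
  refine fun I hI => card_le_one.2 fun x hx y hy => ?_
  rw [mem_inter] at hx hy
  by_contra hxy
  have hpair : L x + L y ≤ ∑ i ∈ I, L i := by
    rw [← sum_pair hxy]
    exact sum_le_sum_of_subset_of_nonneg (insert_subset hx.1 (singleton_subset_iff.2 hy.1))
      fun i _ _ => hL i
  linarith [hT x hx.2 y hy.2 hxy, hI.sum_lt_half]

theorem sortedDesc_eq_cons (L : Fin n → ℝ) (hn : 3 ≤ n) :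
    ∃ d₀ d₁ d₂ t, sortedDesc L = d₀ :: d₁ :: d₂ :: t ∧ d₁ ≤ d₀ ∧ d₂ ≤ d₁ := by
  have hlen : 3 ≤ (sortedDesc L).length := by
    rwa [sortedDesc, List.length_insertionSort, List.length_ofFn]
  have hsort : (sortedDesc L).Pairwise (· ≥ ·) := List.pairwise_insertionSort _ _
  match h : sortedDesc L, hlen with
  | d₀ :: d₁ :: d₂ :: t, _ =>
    rw [h] at hsort
    simp only [List.pairwise_cons, List.mem_cons] at hsort
    exact ⟨d₀, d₁, d₂, t, rfl, hsort.1 d₁ (Or.inl rfl), hsort.2.1 d₂ (Or.inl rfl)⟩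

theorem exists_card_three_s2_add_s3_le (L : Fin n → ℝ) (hn : 3 ≤ n) :
    ∃ T : Finset (Fin n), #T = 3 ∧ ∀ x ∈ T, ∀ y ∈ T, x ≠ y → s2 L + s3 L ≤ L x + L y := by
  obtain ⟨d₀, d₁, d₂, t, hds, h₁₀, h₂₁⟩ := sortedDesc_eq_cons L hn
  have hmap : univ.val.map L = d₀ ::ₘ d₁ ::ₘ d₂ ::ₘ (t : Multiset ℝ) := by
    rw [Fin.univ_val_map, Multiset.cons_coe, Multiset.cons_coe, Multiset.cons_coe, ← hds,
      Multiset.coe_eq_coe]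
    exact (List.perm_insertionSort _ _).symm
  obtain ⟨a, -, ha, hmap⟩ := exists_mem_of_map_val_eq_cons hmap
  obtain ⟨b, hb, hb', hmap⟩ := exists_mem_of_map_val_eq_cons hmap
  obtain ⟨c, hc, hc', -⟩ := exists_mem_of_map_val_eq_cons hmap
  have hs : s2 L = d₁ ∧ s3 L = d₂ := by simp [s2, s3, hds]
  obtain ⟨hcb, hc⟩ := mem_erase.1 hc
  have hba := ne_of_mem_erase hb
  have hca := ne_of_mem_erase hc
  refine ⟨{a, b, c}, card_eq_three.2 ⟨a, b, c, hba.symm, hca.symm, hcb.symm, rfl⟩, ?_⟩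
  simp only [mem_insert, mem_singleton]
  rintro x (rfl | rfl | rfl) y (rfl | rfl | rfl) hxy <;>
    first | exact absurd rfl hxy | linarith

theorem IsVertex.rotT (hV : IsVertex L V) : IsVertex L (rotT V) := by
  obtain ⟨h₁, h₂, h₃, s₁, s₂, s₃, d₁₂, d₁₃, d₂₃, hu⟩ := hV
  refine ⟨h₂, h₃, h₁, s₂, s₃, s₁, d₂₃, d₁₂.symm, d₁₃.symm, ?_⟩
  rw [← hu, _root_.rotT, union_comm, ← union_assoc]

theorem CyclEq.isVertex (h : CyclEq V W) (hV : IsVertex L V) : IsVertex L W := by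
  rcases h with rfl | rfl | rfl
  exacts [hV, hV.rotT, hV.rotT.rotT]

theorem IsVertex.mem_or_mem_or_mem (hV : IsVertex L V) (x : Fin n) :
    x ∈ V.1 ∨ x ∈ V.2.1 ∨ x ∈ V.2.2 := by
  obtain ⟨-, -, -, -, -, -, -, -, -, hu⟩ := hV
  simpa only [← hu, mem_union, or_assoc] using mem_univ x

theorem IsVertex.exists_mem_snd (hV : IsVertex L V) (hT : ShortSeparated L T) (hT3 : 3 ≤ #T) :
    ∃ x ∈ T, x ∈ V.2.1 := by
  by_contra! h
  have hsub : T ⊆ V.1 ∩ T ∪ V.2.2 ∩ T := fun x hx => by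
    have := h x hx
    have := hV.mem_or_mem_or_mem x
    simp only [mem_union, mem_inter]
    tauto
  obtain ⟨-, -, -, s₁, -, s₃, -⟩ := hV
  have := (card_le_card hsub).trans (card_union_le _ _)
  linarith [hT _ s₁, hT _ s₃]

def CycPrecedes (a b : Fin n) (V : LTriple n) : Prop :=
  (a ∈ V.1 ∧ b ∈ V.2.1) ∨ (a ∈ V.2.1 ∧ b ∈ V.2.2) ∨ (a ∈ V.2.2 ∧ b ∈ V.1)

variable {a b : Fin n}

theorem cycPrecedes_rotT : CycPrecedes a b (rotT V) ↔ CycPrecedes a b V := by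
  simp only [CycPrecedes, rotT]
  tauto

theorem CyclEq.cycPrecedes_iff (h : CyclEq V W) : CycPrecedes a b W ↔ CycPrecedes a b V := by
  rcases h with rfl | rfl | rfl
  exacts [Iff.rfl, cycPrecedes_rotT, cycPrecedes_rotT.trans cycPrecedes_rotT]

theorem cycPrecedes_mirrorT : CycPrecedes a b (mirrorT V) ↔ CycPrecedes b a V := by
  simp only [CycPrecedes, mirrorT]
  tauto

theorem IsVertex.cycPrecedes_swap_iff (hV : IsVertex L V) (hT : ShortSeparated L T)
    (ha : a ∈ T) (hb : b ∈ T) (hab : a ≠ b) :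
    CycPrecedes b a V ↔ ¬ CycPrecedes a b V := by
  have ha₃ := hV.mem_or_mem_or_mem a
  have hb₃ := hV.mem_or_mem_or_mem b
  obtain ⟨-, -, -, s₁, s₂, s₃, d₁₂, d₁₃, d₂₃, -⟩ := hV
  have apart : ∀ I, ShortSet L I → a ∈ I → b ∉ I := fun I hI haI hbI =>
    hab (hT.eq_of_mem hI haI hbI ha hb)
  have d₂₁ := disjoint_right.1 d₁₂
  have d₃₁ := disjoint_right.1 d₁₃
  have d₃₂ := disjoint_right.1 d₂₃
  rw [disjoint_left] at d₁₂ d₁₃ d₂₃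
  rcases ha₃ with ha' | ha' | ha' <;> rcases hb₃ with hb' | hb' | hb' <;>
    simp_all [CycPrecedes]

theorem MoveStep.cycPrecedes_iff (hm : MoveStep L V W) (hV : IsVertex L V)
    (hT : ShortSeparated L T) (hT3 : 3 ≤ #T) (ha : a ∈ T) (hb : b ∈ T) :
    CycPrecedes a b W ↔ CycPrecedes a b V := by
  obtain ⟨S, -, hSI, hshort, rfl⟩ := hm
  obtain ⟨y, hyT, hyJ⟩ := hV.exists_mem_snd hT hT3
  obtain ⟨-, -, -, -, -, -, d₁₂, -⟩ := hV
  have hST : ∀ x ∈ T, x ∉ S := fun x hxT hxS =>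
    disjoint_left.1 d₁₂ (hSI.subset hxS)
      (hT.eq_of_mem hshort (mem_union_right _ hxS) (mem_union_left _ hyJ) hxT hyT ▸ hyJ)
  simp only [CycPrecedes, mem_sdiff, mem_union, hST a ha, hST b hb, and_true, or_false,
    not_false_iff]

theorem GammaAdj.cycPrecedes_iff (hadj : GammaAdj L V W) (hV : IsVertex L V)
    (hW : IsVertex L W) (hT : ShortSeparated L T) (hT3 : 3 ≤ #T)
    (ha : a ∈ T) (hb : b ∈ T) : CycPrecedes a b W ↔ CycPrecedes a b V := by
  rcases hadj with ⟨V', W', hV', hm, hW'⟩ | ⟨W', V', hW', hm, hV'⟩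
  · rw [← hV'.cycPrecedes_iff, ← hW'.cycPrecedes_iff]
    exact hm.cycPrecedes_iff (hV'.isVertex hV) hT hT3 ha hb
  · rw [← hV'.cycPrecedes_iff, ← hW'.cycPrecedes_iff]
    exact (hm.cycPrecedes_iff (hW'.isVertex hW) hT hT3 ha hb).symm

theorem GammaPath.cycPrecedes_iff {m : ℕ} (hp : GammaPath L m V W) (hT : ShortSeparated L T)
    (hT3 : 3 ≤ #T) (ha : a ∈ T) (hb : b ∈ T) :
    CycPrecedes a b W ↔ CycPrecedes a b V := by
  obtain ⟨f, hV, hW, hvert, hadj⟩ := hp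
  have key : ∀ i ≤ m, CycPrecedes a b (f i) ↔ CycPrecedes a b (f 0) := by
    intro i hi
    induction i with
    | zero => rfl
    | succ k ih =>
      have hstep := (hadj k hi).cycPrecedes_iff (hvert k (by omega)) (hvert (k + 1) hi) hT hT3 ha hb
      exact hstep.trans (ih (by omega))
  rw [← hV.cycPrecedes_iff, ← hW.cycPrecedes_iff]
  exact key m le_rfl

end

theorem mirror_not_connected_general (n : ℕ) (hn : 3 ≤ n) (L : Fin n → ℝ)
    (hpos : ∀ i, 0 < L i) (hs : (∑ i, L i) / 2 < s2 L + s3 L) :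
    ∀ V : LTriple n, IsVertex L V → ¬ ∃ m, GammaPath L m V (mirrorT V) := by
  obtain ⟨T, hT3, hT⟩ := exists_card_three_s2_add_s3_le L hn
  have hsep : ShortSeparated L T := shortSeparated_of_half_lt_add (fun i => (hpos i).le)
    fun x hx y hy hxy => hs.trans_le (hT x hx y hy hxy)
  obtain ⟨a, ha, b, hb, hab⟩ := one_lt_card.1 (by omega : 1 < #T)
  rintro V hV ⟨m, hp⟩
  have hpath : CycPrecedes b a V ↔ CycPrecedes a b V :=
    cycPrecedes_mirrorT.symm.trans (hp.cycPrecedes_iff hsep hT3.ge ha hb)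
  exact iff_not_self (hpath.symm.trans (hV.cycPrecedes_swap_iff hsep ha hb hab))

/-- If `L` is generic, satisfies the triangle inequality, and
`s₂ + s₃ > (l₁ + ⋯ + lₙ)/2`, then no vertex of `Γ(L)` is joined to its mirror image by
a path in `Γ(L)`: a vertex and its mirror image lie in different connected components. -/
theorem mirror_not_connected (n : ℕ) (hn : 3 ≤ n) (L : Fin n → ℝ)
    (hpos : ∀ i, 0 < L i) (hgen : GenericVec L) (htri : TriangleIneq L)
    (hs : (∑ i, L i) / 2 < s2 L + s3 L) :
    ∀ V : LTriple n, IsVertex L V → ¬ ∃ m, GammaPath L m V (mirrorT V) :=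
  mirror_not_connected_general n hn L hpos hs
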